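/- There exists a universal constant C such that the following holds. Let E ⊂ ℝ² be a finite set, x ∈ ℝ², and k ≥ 0 an integer. Then there exist subsets S₁, …, S₁₂ ⊂ E with #S_i ≤ k for each i, such that ⋂_{i=1}^{12} σ(x, S_i) ⊂ C·σ^♯(x, k), where C·σ^♯(x, k) = {C·P : P ∈ σ^♯(x, k)}. -/

import Mathlib

/-!
In the coordinates `(F x, ∂₁F x, ∂₂F x) ∈ ℝ³` of a jet, each `σ(x, S)` becomes a bounded, convex,
balanced set `K_S`, and `σ♯(x, k)` becomes `K := ⋂ K_S`. A greedy Gram–Schmidt process, in which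
each new direction `uⱼ` nearly maximizes the norm of what is left of `K` after projecting away the
previous directions, yields an orthonormal basis `u₀, u₁, u₂` and widths `wⱼ` with
`K ⊆ {|⟪uⱼ, ·⟫| ≤ 2 wⱼ}` and `wⱼ uⱼ ∈ 3 ^ j • K`; hence the three slabs together lie in
`2 (1 + 3 + 9) • K = 26 • K`. By Helly's theorem in `ℝ³`, each bound `⟪uⱼ, ·⟫ ≤ 2 wⱼ` valid on `K`
already holds on the intersection of four of the `K_S`, and by symmetry so does its absolute
value version; these `3 · 4 = 12` sets are the `Sᵢ`.
-/

noncomputable section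

/-- The plane `ℝ²` with the Euclidean metric. -/
abbrev V2 : Type := EuclideanSpace ℝ (Fin 2)

/-- Partial derivative of `F : ℝ² → ℝ` in the `i`-th coordinate direction. -/
noncomputable def pd (i : Fin 2) (F : V2 → ℝ) : V2 → ℝ :=
  fun x => fderiv ℝ F x (EuclideanSpace.single i 1)

/-- `Σ_{|α| ≤ 2} |∂^α F(x)|²`, the sum over all multi-indices `α` of order at most `2`. -/
noncomputable def c2SqAt (F : V2 → ℝ) (x : V2) : ℝ :=
  (F x) ^ 2 + (pd 0 F x) ^ 2 + (pd 1 F x) ^ 2 +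
    (pd 0 (pd 0 F) x) ^ 2 + (pd 0 (pd 1 F) x) ^ 2 + (pd 1 (pd 1 F) x) ^ 2

/-- `‖F‖_{C²(ℝ²)} := sup_x (Σ_{|α|≤2} |∂^α F(x)|²)^{1/2} ≤ M`. -/
def C2NormLE (F : V2 → ℝ) (M : ℝ) : Prop :=
  ∀ x : V2, Real.sqrt (c2SqAt F x) ≤ M

/-- The 1-jet of `F` at `x`: `𝒥_x F (y) = F(x) + ∇F(x) · (y − x)`. -/
noncomputable def jet (x : V2) (F : V2 → ℝ) : V2 → ℝ :=
  fun y => F x + fderiv ℝ F x (y - x)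

/-- `Γ₊(x, S, M)`: the 1-jets at `x` of nonnegative `C²` functions `F` with
`‖F‖_{C²(ℝ²)} ≤ M` and `F = f` on `S`. -/
def GammaPlus (f : V2 → ℝ) (x : V2) (S : Finset V2) (M : ℝ) : Set (V2 → ℝ) :=
  {P | ∃ F : V2 → ℝ, ContDiff ℝ 2 F ∧ (∀ y : V2, 0 ≤ F y) ∧ C2NormLE F M ∧
        (∀ y ∈ S, F y = f y) ∧ jet x F = P}

/-- `σ(x, S)`: the 1-jets at `x` of `C²` functions `F` with `‖F‖_{C²(ℝ²)} ≤ 1` and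
`F = 0` on `S`. -/
def sigmaSet (x : V2) (S : Finset V2) : Set (V2 → ℝ) :=
  {P | ∃ F : V2 → ℝ, ContDiff ℝ 2 F ∧ (∀ y ∈ S, F y = 0) ∧ C2NormLE F 1 ∧
        jet x F = P}

/-- `Γ₊^♯(x, k, M) := ⋂_{S ⊆ E, #S ≤ k} Γ₊(x, S, M)`. -/
def GammaPlusSharp (E : Finset V2) (f : V2 → ℝ) (x : V2) (k : ℕ) (M : ℝ) :
    Set (V2 → ℝ) :=
  {P | ∀ S : Finset V2, S ⊆ E → S.card ≤ k → P ∈ GammaPlus f x S M}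

/-- `σ^♯(x, k) := ⋂_{S ⊆ E, #S ≤ k} σ(x, S)`. -/
def sigmaSharp (E : Finset V2) (x : V2) (k : ℕ) : Set (V2 → ℝ) :=
  {P | ∀ S : Finset V2, S ⊆ E → S.card ≤ k → P ∈ sigmaSet x S}

open Finset Module RealInnerProductSpace Pointwise

section Helly

variable {𝕜 E ι : Type*} [Field 𝕜] [LinearOrder 𝕜] [IsStrictOrderedRing 𝕜]
  [AddCommGroup E] [Module 𝕜 E] [FiniteDimensional 𝕜 E]

theorem exists_subfamily_card_le_forall_le {K : ι → Set E} {𝒜 : Finset ι}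
    (hK : ∀ i ∈ 𝒜, Convex 𝕜 (K i)) (ℓ : E →ₗ[𝕜] 𝕜) {b : 𝕜}
    (hb : ∀ p ∈ ⋂ i ∈ 𝒜, K i, ℓ p ≤ b) :
    ∃ I ⊆ 𝒜, #I ≤ finrank 𝕜 E + 1 ∧ ∀ p ∈ ⋂ i ∈ I, K i, ℓ p ≤ b := by
  classical
  by_contra! h
  choose! g hgK hgb using h
  obtain rfl | ⟨i₁, hi₁⟩ := 𝒜.eq_empty_or_nonempty
  · exact (hgb ∅ subset_rfl (by simp)).not_ge (hb _ (by simp))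
  obtain ⟨I₀, hI₀, hmin⟩ := (𝒜.powerset.filter (#· ≤ finrank 𝕜 E + 1)).exists_min_image
    (ℓ ∘ g) ⟨∅, by simp⟩
  -- By minimality of `I₀`, any `finrank 𝕜 E + 1` of the sets `K i ∩ {ℓ ≥ ℓ (g I₀)}` meet.
  obtain ⟨p, hp⟩ := Convex.helly_theorem' (s := 𝒜)
    (F := fun i => K i ∩ {p | ℓ (g I₀) ≤ ℓ p})
    (fun i hi => (hK i hi).inter (convex_halfSpace_ge ℓ.isLinear _))
    (fun I hI hcard => ⟨g I, Set.mem_iInter₂.2 fun i hi =>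
      ⟨Set.mem_iInter₂.1 (hgK I hI hcard) i hi, hmin I (by simp [hI, hcard])⟩⟩)
  simp only [Set.mem_iInter₂] at hp
  simp only [mem_filter, mem_powerset] at hI₀
  have hpb := hb p (Set.mem_iInter₂.2 fun i hi => (hp i hi).1)
  exact (hgb I₀ hI₀.1 hI₀.2).not_ge ((hp i₁ hi₁).2.trans hpb)

end Helly

theorem Finset.exists_fin_of_card_le {ι : Type*} {I : Finset ι} {N : ℕ} (hI : #I ≤ N) (i₀ : ι) :
    ∃ f : Fin N → ι, ↑I ⊆ Set.range f ∧ Set.range f ⊆ insert i₀ ↑I := by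
  classical
  refine ⟨fun m => if h : (m : ℕ) < #I then I.equivFin.symm ⟨m, h⟩ else i₀, fun i hi => ?_, ?_⟩
  · exact ⟨Fin.castLE hI (I.equivFin ⟨i, hi⟩), by simp⟩
  · rintro _ ⟨m, rfl⟩
    dsimp only
    split_ifs <;> simp

section Frame

variable {E : Type*} [NormedAddCommGroup E] [InnerProductSpace ℝ E] {K : Set E}

theorem Convex.sum_mem_sum_smul {ι : Type*} (hK : Convex ℝ K) (h0 : 0 ∈ K) {s : Finset ι}
    {c : ι → ℝ} (hc : ∀ j ∈ s, 0 ≤ c j) {x : ι → E} (hx : ∀ j ∈ s, x j ∈ c j • K) :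
    ∑ j ∈ s, x j ∈ (∑ j ∈ s, c j) • K := by
  classical
  induction s using Finset.induction_on with
  | empty => simpa using Set.zero_mem_smul_set h0
  | insert j s hj ih =>
    rw [sum_insert hj, sum_insert hj, hK.add_smul (hc j (mem_insert_self j s))
      (sum_nonneg fun i hi => hc i (mem_insert_of_mem hi))]
    exact Set.add_mem_add (hx j (mem_insert_self j s))
      (ih (fun i hi => hc i (mem_insert_of_mem hi)) fun i hi => hx i (mem_insert_of_mem hi))

theorem Balanced.smul_mem_smul_of_abs_le (hK : Balanced ℝ K) (h0 : 0 ∈ K) {w α c : ℝ} {u : E}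
    (hu : w • u ∈ c • K) (hα : |α| ≤ 2 * w) : α • u ∈ (2 * c) • K := by
  rcases (abs_nonneg α |>.trans hα).eq_or_lt with hw | hw
  · obtain rfl : α = 0 := abs_nonpos_iff.1 (by linarith)
    simpa using Set.zero_mem_smul_set h0
  · have hw : 0 < w := by linarith
    have hmem : α • u ∈ (α / w * c) • K := by
      rw [show α • u = (α / w) • (w • u) by rw [smul_smul, div_mul_cancel₀ _ hw.ne'], mul_smul]
      exact Set.smul_mem_smul_set hu
    refine hK.smul_mono ?_ hmem
    rw [Real.norm_eq_abs, Real.norm_eq_abs, abs_mul, abs_mul, abs_two, abs_div, abs_of_pos hw]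
    gcongr
    rwa [div_le_iff₀ hw]

theorem mem_orthogonal_span_range {ι : Type*} {f : ι → E} {v : E} :
    v ∈ (Submodule.span ℝ (Set.range f))ᗮ ↔ ∀ i, ⟪f i, v⟫ = 0 := by
  refine ⟨fun h i => (Submodule.mem_orthogonal _ _).1 h _ (Submodule.subset_span ⟨i, rfl⟩),
    fun h => (Submodule.mem_orthogonal _ _).2 fun w hw => ?_⟩
  induction hw using Submodule.span_induction with
  | mem x hx => obtain ⟨i, rfl⟩ := hx; exact h i
  | zero => simp
  | add x y _ _ hx hy => rw [inner_add_left, hx, hy, add_zero]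
  | smul a x _ hx => rw [real_inner_smul_left, hx, mul_zero]

theorem exists_unit_near_sup {T : Set E} {U : Submodule ℝ E} (hU : U ≠ ⊥) (hTU : T ⊆ U)
    (hT : Bornology.IsBounded T) (h0 : 0 ∈ T) :
    ∃ v ∈ U, ‖v‖ = 1 ∧ ∃ w : ℝ, w • v ∈ T ∧ ∀ t ∈ T, ‖t‖ ≤ 2 * w := by
  obtain ⟨C, hC⟩ := isBounded_iff_forall_norm_le.1 hT
  have hle : ∀ t ∈ T, ‖t‖ ≤ sSup (norm '' T) := fun t ht =>
    le_csSup ⟨C, Set.forall_mem_image.2 hC⟩ ⟨t, ht, rfl⟩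
  rcases le_or_gt (sSup (norm '' T)) 0 with hs | hs
  · obtain ⟨u₀, hu₀U, hu₀⟩ := (Submodule.ne_bot_iff U).1 hU
    exact ⟨‖u₀‖⁻¹ • u₀, U.smul_mem _ hu₀U, norm_smul_inv_norm hu₀, 0, by simpa using h0,
      fun t ht => by linarith [hle t ht]⟩
  · obtain ⟨_, ⟨t₀, ht₀, rfl⟩, ht₀s⟩ :=
      exists_lt_of_lt_csSup ((Set.nonempty_of_mem h0).image _) (half_lt_self hs)
    have ht₀0 : t₀ ≠ 0 := by rintro rfl; simp at ht₀s; linarith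
    refine ⟨‖t₀‖⁻¹ • t₀, U.smul_mem _ (hTU ht₀), norm_smul_inv_norm ht₀0, ‖t₀‖, ?_,
      fun t ht => by linarith [hle t ht]⟩
    rwa [smul_inv_smul₀ (norm_ne_zero_iff.2 ht₀0)]

/-- `w j • u j` will be the residual of a point of `K` after removing its components along
`u 0, …, u (j - 1)`; these components contribute `∑ i < j, 2 * 3 ^ i`, whence the factor `3 ^ j`. -/
structure IsAdaptedFrame (K : Set E) (m : ℕ) (u : ℕ → E) (w : ℕ → ℝ) : Prop where
  inner_eq : ∀ i < m, ∀ j < m, ⟪u i, u j⟫ = if i = j then 1 else 0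
  abs_inner_le : ∀ j < m, ∀ p ∈ K, |⟪u j, p⟫| ≤ 2 * w j
  smul_mem : ∀ j < m, w j • u j ∈ (3 ^ j : ℝ) • K

def orthResidual (u : ℕ → E) (m : ℕ) (p : E) : E := p - ∑ j ∈ range m, ⟪u j, p⟫ • u j

variable {m : ℕ} {u : ℕ → E} {w : ℕ → ℝ}

theorem inner_orthResidual_of_lt (hu : ∀ i < m, ∀ j < m, ⟪u i, u j⟫ = if i = j then 1 else 0)
    {i : ℕ} (hi : i < m) (p : E) : ⟪u i, orthResidual u m p⟫ = 0 := by
  rw [orthResidual, inner_sub_right, inner_sum,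
    sum_congr rfl fun j hj => by rw [real_inner_smul_right, hu i hi j (mem_range.1 hj)]]
  simp [mem_range.2 hi]

theorem orthResidual_mem_orthogonal
    (hu : ∀ i < m, ∀ j < m, ⟪u i, u j⟫ = if i = j then 1 else 0) (p : E) :
    orthResidual u m p ∈ (Submodule.span ℝ (Set.range fun j : Fin m => u j))ᗮ :=
  mem_orthogonal_span_range.2 fun j => inner_orthResidual_of_lt hu j.2 p

theorem inner_orthResidual_of_orthogonal {v : E} (hv : ∀ j < m, ⟪u j, v⟫ = 0) (p : E) :
    ⟪v, orthResidual u m p⟫ = ⟪v, p⟫ := by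
  rw [orthResidual, inner_sub_right, inner_sum, sum_eq_zero fun j hj => by
    rw [real_inner_smul_right, real_inner_comm (u j) v, hv j (mem_range.1 hj), mul_zero], sub_zero]

namespace IsAdaptedFrame

theorem orthonormal (hf : IsAdaptedFrame K m u w) : Orthonormal ℝ fun j : Fin m => u j :=
  orthonormal_iff_ite.2 fun i j => by simp [hf.inner_eq i i.2 j j.2, Fin.val_inj]

variable (hf : IsAdaptedFrame K m u w) (hKc : Convex ℝ K) (hKb : Balanced ℝ K) (h0 : 0 ∈ K)
include hf hKc hKb h0

theorem sum_mem_smul {q : E} (hq : ∀ j < m, |⟪u j, q⟫| ≤ 2 * w j) :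
    ∑ j ∈ range m, ⟪u j, q⟫ • u j ∈ (3 ^ m - 1 : ℝ) • K := by
  have hgeom : ∑ j ∈ range m, (2 * 3 ^ j : ℝ) = 3 ^ m - 1 := by
    rw [← mul_sum, geom_sum_eq (by norm_num)]
    ring
  rw [← hgeom]
  exact hKc.sum_mem_sum_smul h0 (fun j _ => by positivity) fun j hj =>
    hKb.smul_mem_smul_of_abs_le h0 (hf.smul_mem j (mem_range.1 hj)) (hq j (mem_range.1 hj))

theorem orthResidual_mem_smul {p : E} (hp : p ∈ K) : orthResidual u m p ∈ (3 ^ m : ℝ) • K := by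
  have hsum := hf.sum_mem_smul hKc hKb h0 fun j hj =>
    hf.abs_inner_le j hj _ (hKb.neg_mem_iff.2 hp)
  rw [show (3 ^ m : ℝ) = 1 + (3 ^ m - 1) by ring,
    hKc.add_smul zero_le_one (by simp [one_le_pow₀])]
  convert Set.add_mem_add (Set.smul_mem_smul_set (a := (1 : ℝ)) hp) hsum using 1
  simp [orthResidual, sub_eq_add_neg]

theorem extend [FiniteDimensional ℝ E] (hm : m < finrank ℝ E) (hK : Bornology.IsBounded K) :
    ∃ (u' : ℕ → E) (w' : ℕ → ℝ), IsAdaptedFrame K (m + 1) u' w' := by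
  set W := Submodule.span ℝ (Set.range fun j : Fin m => u j)
  have hW : Wᗮ ≠ ⊥ := by
    intro h
    have h₁ := W.finrank_add_finrank_orthogonal
    have h₂ : finrank ℝ W ≤ m :=
      (finrank_range_le_card (R := ℝ) fun j : Fin m => u j).trans_eq (Fintype.card_fin m)
    rw [h, finrank_bot] at h₁
    omega
  obtain ⟨v, hvW, hv, w₀, ⟨p₀, hp₀, hp₀v⟩, hw₀⟩ := exists_unit_near_sup hW
    (Set.image_subset_iff.2 fun p _ => orthResidual_mem_orthogonal hf.inner_eq p)
    ((hK.smul₀ (3 ^ m : ℝ)).subset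
      (Set.image_subset_iff.2 fun p hp => hf.orthResidual_mem_smul hKc hKb h0 hp))
    ⟨0, h0, by simp [orthResidual]⟩
  have hvu : ∀ j < m, ⟪u j, v⟫ = 0 := fun j hj => mem_orthogonal_span_range.1 hvW ⟨j, hj⟩
  refine ⟨fun j => if j < m then u j else v, fun j => if j < m then w j else w₀, ⟨?_, ?_, ?_⟩⟩
  · intro i hi j hj
    rcases Nat.lt_succ_iff_lt_or_eq.1 hi with hi | rfl <;>
      rcases Nat.lt_succ_iff_lt_or_eq.1 hj with hj | rfl
    · simpa [hi, hj] using hf.inner_eq i hi j hj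
    · simp [hi, hvu i hi, hi.ne]
    · simpa [hj, hj.ne'] using (real_inner_comm (u j) v).trans (hvu j hj)
    · simp [hv]
  · intro j hj p hp
    rcases Nat.lt_succ_iff_lt_or_eq.1 hj with hj | rfl
    · simpa [hj] using hf.abs_inner_le j hj p hp
    · simp only [lt_irrefl, if_false]
      rw [← inner_orthResidual_of_orthogonal hvu]
      calc |⟪v, orthResidual u j p⟫| ≤ ‖v‖ * ‖orthResidual u j p‖ := abs_real_inner_le_norm _ _
        _ ≤ 2 * w₀ := by rw [hv, one_mul]; exact hw₀ _ ⟨p, hp, rfl⟩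
  · intro j hj
    rcases Nat.lt_succ_iff_lt_or_eq.1 hj with hj | rfl
    · simpa [hj] using hf.smul_mem j hj
    · simpa [← hp₀v] using hf.orthResidual_mem_smul hKc hKb h0 hp₀

theorem mem_smul_of_abs_inner_le [FiniteDimensional ℝ E] (hm : m = finrank ℝ E) {q : E}
    (hq : ∀ j < m, |⟪u j, q⟫| ≤ 2 * w j) : q ∈ (3 ^ m - 1 : ℝ) • K := by
  have hspan : Submodule.span ℝ (Set.range fun j : Fin m => u j) = ⊤ :=
    hf.orthonormal.linearIndependent.span_eq_top_of_card_eq_finrank' (by simp [hm])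
  have hres := orthResidual_mem_orthogonal hf.inner_eq q
  rw [hspan, Submodule.top_orthogonal_eq_bot, Submodule.mem_bot, orthResidual,
    sub_eq_zero] at hres
  rw [hres]
  exact hf.sum_mem_smul hKc hKb h0 hq

end IsAdaptedFrame

theorem exists_isAdaptedFrame [FiniteDimensional ℝ E] (hKc : Convex ℝ K) (hKb : Balanced ℝ K)
    (h0 : 0 ∈ K) (hK : Bornology.IsBounded K) :
    ∀ m ≤ finrank ℝ E, ∃ (u : ℕ → E) (w : ℕ → ℝ), IsAdaptedFrame K m u w
  | 0, _ => ⟨0, 0, by constructor <;> simp⟩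
  | m + 1, hm =>
    have ⟨_, _, hf⟩ := exists_isAdaptedFrame hKc hKb h0 hK m (by omega)
    hf.extend hKc hKb h0 (by omega) hK

theorem exists_subfamily_iInter_subset_smul [FiniteDimensional ℝ E] {ι : Type*}
    {𝒜 : Finset ι} {K : ι → Set E} (hKc : ∀ i ∈ 𝒜, Convex ℝ (K i))
    (hKb : ∀ i ∈ 𝒜, Balanced ℝ (K i)) (h0 : ∀ i ∈ 𝒜, 0 ∈ K i)
    (hK : Bornology.IsBounded (⋂ i ∈ 𝒜, K i)) :
    ∃ I ⊆ 𝒜, #I ≤ finrank ℝ E * (finrank ℝ E + 1) ∧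
      ⋂ i ∈ I, K i ⊆ (3 ^ finrank ℝ E - 1 : ℝ) • ⋂ i ∈ 𝒜, K i := by
  classical
  have hc : Convex ℝ (⋂ i ∈ 𝒜, K i) := convex_iInter₂ hKc
  have hb : Balanced ℝ (⋂ i ∈ 𝒜, K i) := balanced_iInter₂ hKb
  have h0' : (0 : E) ∈ ⋂ i ∈ 𝒜, K i := Set.mem_iInter₂.2 h0
  obtain ⟨u, w, hf⟩ := exists_isAdaptedFrame hc hb h0' hK _ le_rfl
  -- One Helly selection per slab `⟪u j, ·⟫ ≤ 2 * w j`; balancedness gives the other side.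
  choose I hI𝒜 hIcard hI using fun j : Fin (finrank ℝ E) =>
    exists_subfamily_card_le_forall_le hKc (innerₗ E (u j)) (b := 2 * w j)
      fun p hp => (le_abs_self _).trans (hf.abs_inner_le j j.2 p hp)
  refine ⟨univ.biUnion I, biUnion_subset.2 fun j _ => hI𝒜 j, card_biUnion_le.trans ?_,
    fun q hq => hf.mem_smul_of_abs_inner_le hc hb h0' rfl fun j hj => ?_⟩
  · simpa using sum_le_card_nsmul univ (fun j => #(I j)) _ fun j _ => hIcard j
  · have hq' : ∀ i ∈ I ⟨j, hj⟩, q ∈ K i := fun i hi =>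
      Set.mem_iInter₂.1 hq i (mem_biUnion.2 ⟨⟨j, hj⟩, mem_univ _, hi⟩)
    have h₁ := hI ⟨j, hj⟩ q (Set.mem_iInter₂.2 hq')
    have h₂ := hI ⟨j, hj⟩ (-q) (Set.mem_iInter₂.2 fun i hi =>
      (hKb i (hI𝒜 _ hi)).neg_mem_iff.2 (hq' i hi))
    simp only [innerₗ_apply_apply, inner_neg_right] at h₁ h₂
    exact abs_le.2 ⟨by linarith, h₁⟩

end Frame

theorem fderiv_smul_add_smul {𝕜 E F : Type*} [NontriviallyNormedField 𝕜] [NormedAddCommGroup E]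
    [NormedSpace 𝕜 E] [NormedAddCommGroup F] [NormedSpace 𝕜 F] {f g : E → F} {z : E}
    (hf : DifferentiableAt 𝕜 f z) (hg : DifferentiableAt 𝕜 g z) (a b : 𝕜) :
    fderiv 𝕜 (a • f + b • g) z = a • fderiv 𝕜 f z + b • fderiv 𝕜 g z := by
  rw [fderiv_add (hf.const_smul a) (hg.const_smul b), fderiv_const_smul hf,
    fderiv_const_smul hg]

theorem contDiff_pd {F : V2 → ℝ} (hF : ContDiff ℝ 2 F) (i : Fin 2) : ContDiff ℝ 1 (pd i F) :=
  (ContinuousLinearMap.apply ℝ ℝ (EuclideanSpace.single i 1)).contDiff.comp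
    (hF.fderiv_right le_rfl)

theorem pd_smul_add_smul {F G : V2 → ℝ} (hF : Differentiable ℝ F) (hG : Differentiable ℝ G)
    (a b : ℝ) (i : Fin 2) : pd i (a • F + b • G) = a • pd i F + b • pd i G := by
  funext z
  simp [pd, fderiv_smul_add_smul (hF z) (hG z)]

theorem pd_zero (i : Fin 2) : pd i 0 = 0 := by
  funext z
  simp [pd]

theorem jet_smul_add_smul {F G : V2 → ℝ} {x : V2} (hF : DifferentiableAt ℝ F x)
    (hG : DifferentiableAt ℝ G x) (a b : ℝ) :
    jet x (a • F + b • G) = a • jet x F + b • jet x G := by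
  funext y
  simp [jet, fderiv_smul_add_smul hF hG]
  ring

def c2Vec (F : V2 → ℝ) (z : V2) : EuclideanSpace ℝ (Fin 6) :=
  !₂[F z, pd 0 F z, pd 1 F z, pd 0 (pd 0 F) z, pd 0 (pd 1 F) z, pd 1 (pd 1 F) z]

theorem sqrt_c2SqAt (F : V2 → ℝ) (z : V2) : √(c2SqAt F z) = ‖c2Vec F z‖ := by
  simp [EuclideanSpace.norm_eq, c2Vec, c2SqAt, Fin.sum_univ_succ, add_assoc]

theorem c2Vec_smul_add_smul {F G : V2 → ℝ} (hF : ContDiff ℝ 2 F) (hG : ContDiff ℝ 2 G)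
    (a b : ℝ) (z : V2) : c2Vec (a • F + b • G) z = a • c2Vec F z + b • c2Vec G z := by
  have h₁ := pd_smul_add_smul (hF.differentiable two_ne_zero) (hG.differentiable two_ne_zero) a b
  have h₂ := fun i => pd_smul_add_smul ((contDiff_pd hF i).differentiable one_ne_zero)
    ((contDiff_pd hG i).differentiable one_ne_zero) a b
  ext j
  fin_cases j <;> simp [c2Vec, h₁, h₂]

theorem smul_add_smul_mem_sigmaSet {x : V2} {S : Finset V2} {P Q : V2 → ℝ}
    (hP : P ∈ sigmaSet x S) (hQ : Q ∈ sigmaSet x S) {a b : ℝ} (hab : |a| + |b| ≤ 1) :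
    a • P + b • Q ∈ sigmaSet x S := by
  obtain ⟨F, hF, hFS, hFn, rfl⟩ := hP
  obtain ⟨G, hG, hGS, hGn, rfl⟩ := hQ
  refine ⟨a • F + b • G, (hF.const_smul a).add (hG.const_smul b), fun y hy => ?_, fun z => ?_,
    jet_smul_add_smul (hF.differentiable two_ne_zero x) (hG.differentiable two_ne_zero x) a b⟩
  · simp [hFS y hy, hGS y hy]
  · have hFz := hFn z
    have hGz := hGn z
    rw [sqrt_c2SqAt] at hFz hGz ⊢
    rw [c2Vec_smul_add_smul hF hG]
    calc ‖a • c2Vec F z + b • c2Vec G z‖ ≤ |a| * ‖c2Vec F z‖ + |b| * ‖c2Vec G z‖ := by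
          simpa [norm_smul] using norm_add_le (a • c2Vec F z) (b • c2Vec G z)
      _ ≤ |a| * 1 + |b| * 1 := by gcongr
      _ ≤ 1 := by linarith

theorem convex_sigmaSet (x : V2) (S : Finset V2) : Convex ℝ (sigmaSet x S) :=
  fun _ hP _ hQ a b ha hb hab => smul_add_smul_mem_sigmaSet hP hQ
    (by rw [abs_of_nonneg ha, abs_of_nonneg hb, hab])

theorem balanced_sigmaSet (x : V2) (S : Finset V2) : Balanced ℝ (sigmaSet x S) :=
  balanced_iff_smul_mem.2 fun a ha P hP => by
    simpa using smul_add_smul_mem_sigmaSet hP hP (a := a) (b := 0) (by simpa using ha)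

theorem zero_mem_sigmaSet (x : V2) (S : Finset V2) : 0 ∈ sigmaSet x S :=
  ⟨0, contDiff_const, fun _ _ => rfl, fun z => by simp [c2SqAt, pd_zero],
    by funext y; simp [jet]⟩

def affJet (x : V2) : EuclideanSpace ℝ (Fin 3) →ₗ[ℝ] V2 → ℝ where
  toFun v y := v 0 + v 1 * (y - x) 0 + v 2 * (y - x) 1
  map_add' v w := by funext y; simp; ring
  map_smul' c v := by funext y; simp; ring

theorem jet_eq_affJet (F : V2 → ℝ) (x : V2) :
    jet x F = affJet x !₂[F x, pd 0 F x, pd 1 F x] := by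
  funext y
  have hyx : y - x =
      (y - x) 0 • EuclideanSpace.single 0 1 + (y - x) 1 • EuclideanSpace.single 1 1 := by
    ext i; fin_cases i <;> simp
  rw [jet, hyx]
  simp [affJet, pd]
  ring

theorem affJet_injective (x : V2) : Function.Injective (affJet x) := by
  refine (injective_iff_map_eq_zero _).2 fun v hv => ?_
  have h₀ := congrFun hv x
  have h₁ := congrFun hv (x + EuclideanSpace.single 0 1)
  have h₂ := congrFun hv (x + EuclideanSpace.single 1 1)
  simp [affJet] at h₀ h₁ h₂
  ext i
  fin_cases i <;> simp <;> linarith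

theorem sigmaSet_subset_range_affJet (x : V2) (S : Finset V2) :
    sigmaSet x S ⊆ Set.range (affJet x) := by
  rintro _ ⟨F, -, -, -, rfl⟩
  exact ⟨_, (jet_eq_affJet F x).symm⟩

def jetCoeffSet (x : V2) (S : Finset V2) : Set (EuclideanSpace ℝ (Fin 3)) :=
  affJet x ⁻¹' sigmaSet x S

theorem norm_le_one_of_mem_jetCoeffSet {x : V2} {S : Finset V2} {v : EuclideanSpace ℝ (Fin 3)}
    (hv : v ∈ jetCoeffSet x S) : ‖v‖ ≤ 1 := by
  obtain ⟨F, -, -, hFn, hFv⟩ := hv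
  rw [jet_eq_affJet F x] at hFv
  obtain rfl := affJet_injective x hFv
  refine le_trans ?_ (hFn x)
  rw [EuclideanSpace.norm_eq]
  refine Real.sqrt_le_sqrt ?_
  simp [Fin.sum_univ_succ, c2SqAt]
  nlinarith [sq_nonneg (pd 0 (pd 0 F) x), sq_nonneg (pd 0 (pd 1 F) x),
    sq_nonneg (pd 1 (pd 1 F) x)]

theorem exists_subfamily_iInter_jetCoeffSet_subset (x : V2) {𝒜 : Finset (Finset V2)}
    (h𝒜 : 𝒜.Nonempty) :
    ∃ I ⊆ 𝒜, #I ≤ 12 ∧ ⋂ S ∈ I, jetCoeffSet x S ⊆ (26 : ℝ) • ⋂ S ∈ 𝒜, jetCoeffSet x S := by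
  obtain ⟨S₀, hS₀⟩ := h𝒜
  have h := exists_subfamily_iInter_subset_smul (𝒜 := 𝒜) (K := jetCoeffSet x)
    (fun S _ => (convex_sigmaSet x S).linear_preimage _)
    (fun S _ => (balanced_sigmaSet x S).mulActionHom_preimage (affJet x).toMulActionHom)
    (fun S _ => by simp [jetCoeffSet, zero_mem_sigmaSet])
    (Metric.isBounded_closedBall.subset fun v hv => mem_closedBall_zero_iff.2
      (norm_le_one_of_mem_jetCoeffSet (Set.mem_iInter₂.1 hv S₀ hS₀)))
  rw [finrank_euclideanSpace_fin] at h
  norm_num at h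
  exact h

/-- **Lemma 4.5.** There is a universal constant `C` such that for every finite `E ⊆ ℝ²`,
every `x ∈ ℝ²`, and every `k`, there are twelve subsets `S 0, …, S 11 ⊆ E`, each of
cardinality at most `k`, with `⋂ᵢ σ(x, Sᵢ) ⊆ C · σ^♯(x, k)`. -/
theorem sigmaSharp_helly_selection :
    ∃ C : ℝ, 0 < C ∧
      ∀ (E : Finset V2) (x : V2) (k : ℕ),
        ∃ S : Fin 12 → Finset V2,
          (∀ i : Fin 12, S i ⊆ E ∧ (S i).card ≤ k) ∧
          ∀ P : V2 → ℝ, (∀ i : Fin 12, P ∈ sigmaSet x (S i)) →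
            ∃ Q ∈ sigmaSharp E x k, P = C • Q := by
  refine ⟨26, by norm_num, fun E x k => ?_⟩
  classical
  set 𝒜 := E.powerset.filter (#· ≤ k)
  have h𝒜 : ∀ {S}, S ∈ 𝒜 ↔ S ⊆ E ∧ #S ≤ k := by simp [𝒜]
  have hempty : ∅ ∈ 𝒜 := h𝒜.2 ⟨empty_subset _, by simp⟩
  obtain ⟨I, hI𝒜, hIcard, hI⟩ := exists_subfamily_iInter_jetCoeffSet_subset x ⟨∅, hempty⟩
  obtain ⟨S, hIS, hSI⟩ := exists_fin_of_card_le hIcard ∅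
  refine ⟨S, fun m => h𝒜.1 ?_, fun P hP => ?_⟩
  · obtain h | h := hSI ⟨m, rfl⟩
    exacts [h ▸ hempty, hI𝒜 h]
  · obtain ⟨v, rfl⟩ := sigmaSet_subset_range_affJet x _ (hP 0)
    obtain ⟨v', hv', rfl⟩ := hI (Set.mem_iInter₂.2 fun S' hS' => by
      obtain ⟨m, rfl⟩ := hIS hS'
      exact hP m)
    exact ⟨affJet x v', fun S' hS'E hS'k => Set.mem_iInter₂.1 hv' S' (h𝒜.2 ⟨hS'E, hS'k⟩),
      map_smul _ _ _⟩
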